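/- Let p > 1 be real and define f_p(z) = 1 - (1-z)(1 - z/p)^{-p} (principal branch), analytic on D(0,p). Then for every z in the closed unit disk with z ∉ {0,1}, |f_p(z)| < |z|^2. -/

import Mathlib

/-!
Write `(1 - z/p)^(-p) = ∑ aₙ zⁿ` with `aₙ = (p)ₙ / (n! pⁿ)`, the binomial series evaluated at
`z/p`. Then `f_p(z) = z² ∑ cₙ zⁿ` with `cₙ = aₙ₊₁ - aₙ₊₂` (using `a₀ = a₁ = 1`). Because
`aₙ₊₁ / aₙ = (p + n) / ((n + 1) p) < 1` for `n ≥ 1`, every `cₙ` is positive, and `f_p(1) = 1`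
gives `∑ cₙ = 1`. So `|∑ cₙ zⁿ| ≤ |c₀ + c₁ z| + (1 - c₀ - c₁) < 1` for `|z| ≤ 1`, `z ≠ 1`: the
strict inequality `|c₀ + c₁ z| < c₀ + c₁` holds because `Re z < 1`.
-/

open scoped Nat

theorem Ring.choose_add_sub_one_eq_ascPochhammer_div {K : Type*} [Field K] [CharZero K] (r : K)
    (n : ℕ) : Ring.choose (r + n - 1) n = (ascPochhammer K n).eval r / n ! := by
  rw [← Ring.multichoose_eq, eq_div_iff (Nat.cast_ne_zero.2 n.factorial_ne_zero), mul_comm,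
    ← nsmul_eq_mul, Ring.factorial_nsmul_multichoose_eq_ascPochhammer,
    Polynomial.ascPochhammer_smeval_eq_eval]

theorem Complex.ofReal_ascPochhammer_eval (x : ℝ) (n : ℕ) :
    (((ascPochhammer ℝ n).eval x : ℝ) : ℂ) = (ascPochhammer ℂ n).eval (x : ℂ) := by
  rw [ascPochhammer_eval₂ Complex.ofRealHom]
  exact (Polynomial.eval₂_at_apply Complex.ofRealHom x).symm

noncomputable def negPowCoeff (p : ℝ) (n : ℕ) : ℝ := (ascPochhammer ℝ n).eval p / (n ! * p ^ n)

section NegPowCoeff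

variable {p : ℝ}

@[simp]
theorem negPowCoeff_zero : negPowCoeff p 0 = 1 := by
  simp [negPowCoeff]

theorem negPowCoeff_succ (hp : p ≠ 0) (n : ℕ) :
    negPowCoeff p (n + 1) = negPowCoeff p n * ((p + n) / ((n + 1) * p)) := by
  unfold negPowCoeff
  rw [ascPochhammer_succ_eval, Nat.factorial_succ]
  push_cast
  field_simp
  ring

theorem negPowCoeff_one (hp : p ≠ 0) : negPowCoeff p 1 = 1 := by
  simp [negPowCoeff_succ hp 0, hp]

theorem negPowCoeff_pos (hp : 0 < p) (n : ℕ) : 0 < negPowCoeff p n :=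
  div_pos (ascPochhammer_pos n p hp) (by positivity)

theorem negPowCoeff_succ_lt (hp : 1 < p) {n : ℕ} (hn : n ≠ 0) :
    negPowCoeff p (n + 1) < negPowCoeff p n := by
  have hp0 : 0 < p := one_pos.trans hp
  have hratio : (p + n) / ((n + 1) * p) < 1 := by
    rw [div_lt_one (by positivity)]
    have : (1 : ℝ) ≤ n := by exact_mod_cast Nat.one_le_iff_ne_zero.2 hn
    nlinarith
  rw [negPowCoeff_succ hp0.ne']
  exact mul_lt_of_lt_one_right (negPowCoeff_pos hp0 n) hratio

theorem hasSum_negPowCoeff (hp : 0 < p) {z : ℂ} (hz : ‖z‖ < p) :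
    HasSum (fun n => (negPowCoeff p n : ℂ) * z ^ n) ((1 - z / p) ^ (-(p : ℂ))) := by
  have hzp : z / p ∈ Metric.eball (0 : ℂ) 1 := by
    rw [← ENNReal.ofReal_one, Metric.eball_ofReal, Metric.mem_ball, dist_zero_right, norm_div,
      Complex.norm_real, Real.norm_of_nonneg hp.le, div_lt_one hp]
    exact hz
  have h := (Complex.one_div_one_sub_cpow_hasFPowerSeriesOnBall_zero p).hasSum hzp
  simp only [FormalMultilinearSeries.ofScalars_apply_eq, zero_add,
    Ring.choose_add_sub_one_eq_ascPochhammer_div, Complex.cpow_neg, one_div] at h ⊢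
  have hterm : ∀ n : ℕ, (negPowCoeff p n : ℂ) * z ^ n
      = ((ascPochhammer ℂ n).eval (p : ℂ) / n !) • (z / p) ^ n := fun n => by
    unfold negPowCoeff
    push_cast
    rw [Complex.ofReal_ascPochhammer_eval, smul_eq_mul, div_pow]
    field_simp
  simpa only [hterm] using h

end NegPowCoeff

theorem hasSum_one_sub_one_sub_mul {R : Type*} [CommRing R] [TopologicalSpace R]
    [IsTopologicalRing R] {a : ℕ → R} {z F : R} (h : HasSum (fun n => a n * z ^ n) F)
    (h0 : a 0 = 1) (h1 : a 1 = 1) :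
    HasSum (fun n => (a (n + 1) - a (n + 2)) * z ^ (n + 2)) (1 - (1 - z) * F) := by
  have h₁ := ((hasSum_nat_add_iff' 1).2 h).mul_left z
  have h₂ := (hasSum_nat_add_iff' 2).2 h
  have hterm : (fun n => (a (n + 1) - a (n + 2)) * z ^ (n + 2))
      = fun n => z * (a (n + 1) * z ^ (n + 1)) - a (n + 2) * z ^ (n + 2) := by
    funext n
    ring
  have hsum : 1 - (1 - z) * F = z * (F - ∑ i ∈ Finset.range 1, a i * z ^ i)
      - (F - ∑ i ∈ Finset.range 2, a i * z ^ i) := by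
    simp only [Finset.sum_range_succ, Finset.sum_range_zero, h0, h1]
    ring
  rw [hterm, hsum]
  exact h₁.sub h₂

theorem Complex.re_mul_self_add_im_mul_self_le_one {z : ℂ} (hz : ‖z‖ ≤ 1) :
    z.re * z.re + z.im * z.im ≤ 1 := by
  rw [← Complex.normSq_apply, ← Complex.sq_norm]
  exact pow_le_one₀ (norm_nonneg z) hz

theorem Complex.re_lt_one_of_norm_le_one {z : ℂ} (hz : ‖z‖ ≤ 1) (hz1 : z ≠ 1) : z.re < 1 := by
  refine (z.re_le_norm.trans hz).lt_of_ne fun hre => hz1 (Complex.ext hre ?_)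
  have := Complex.re_mul_self_add_im_mul_self_le_one hz
  rw [hre] at this
  simp only [Complex.one_im]
  nlinarith

theorem Complex.norm_ofReal_add_ofReal_mul_lt {a b : ℝ} (ha : 0 < a) (hb : 0 < b) {z : ℂ}
    (hz : ‖z‖ ≤ 1) (hz1 : z ≠ 1) : ‖(a : ℂ) + b * z‖ < a + b := by
  have hre := Complex.re_lt_one_of_norm_le_one hz hz1
  have hnormSq := Complex.re_mul_self_add_im_mul_self_le_one hz
  refine lt_of_pow_lt_pow_left₀ 2 (by positivity) ?_
  rw [Complex.sq_norm, Complex.normSq_apply]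
  simp only [Complex.add_re, Complex.add_im, Complex.mul_re, Complex.mul_im, Complex.ofReal_re,
    Complex.ofReal_im, zero_mul, sub_zero, zero_add, add_zero]
  nlinarith [mul_pos (mul_pos ha hb) (sub_pos.2 hre),
    mul_nonneg (sq_nonneg b) (sub_nonneg.2 hnormSq)]

theorem norm_tsum_ofReal_mul_pow_lt_one {c : ℕ → ℝ} (hc : ∀ n, 0 ≤ c n) (hsum : HasSum c 1)
    (h0 : 0 < c 0) (h1 : 0 < c 1) {z : ℂ} (hz : ‖z‖ ≤ 1) (hz1 : z ≠ 1) :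
    ‖∑' n, (c n : ℂ) * z ^ n‖ < 1 := by
  have hterm : ∀ n, ‖(c n : ℂ) * z ^ n‖ ≤ c n := fun n => by
    rw [norm_mul, norm_pow, Complex.norm_real, Real.norm_of_nonneg (hc n)]
    exact mul_le_of_le_one_right (hc n) (pow_le_one₀ (norm_nonneg z) hz)
  have htail : ‖∑' n, (c (n + 2) : ℂ) * z ^ (n + 2)‖ ≤ 1 - (c 0 + c 1) := by
    refine tsum_of_norm_bounded ?_ fun n => hterm (n + 2)
    simpa [Finset.sum_range_succ] using (hasSum_nat_add_iff' 2).2 hsum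
  rw [← (Summable.of_norm_bounded hsum.summable hterm).sum_add_tsum_nat_add 2]
  calc ‖∑ n ∈ Finset.range 2, (c n : ℂ) * z ^ n + ∑' n, (c (n + 2) : ℂ) * z ^ (n + 2)‖
      ≤ ‖(c 0 : ℂ) + c 1 * z‖ + ‖∑' n, (c (n + 2) : ℂ) * z ^ (n + 2)‖ := by
        simpa [Finset.sum_range_succ] using norm_add_le _ _
    _ < (c 0 + c 1) + (1 - (c 0 + c 1)) :=
        add_lt_add_of_lt_of_le (Complex.norm_ofReal_add_ofReal_mul_lt h0 h1 hz hz1) htail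
    _ = 1 := by ring

theorem stmt_7 (p : ℝ) (hp : 1 < p) :
    ∀ z : ℂ, ‖z‖ ≤ 1 → z ≠ 0 → z ≠ 1 →
      ‖1 - (1 - z) * (1 - z / p) ^ (-(p : ℂ))‖ < ‖z‖ ^ 2 := by
  intro z hz hz0 hz1
  have hp0 : 0 < p := one_pos.trans hp
  set c : ℕ → ℝ := fun n => negPowCoeff p (n + 1) - negPowCoeff p (n + 2)
  have hc_pos : ∀ n, 0 < c n := fun n => sub_pos.2 (negPowCoeff_succ_lt hp n.succ_ne_zero)
  have hexpand : ∀ {w : ℂ}, ‖w‖ ≤ 1 →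
      HasSum (fun n => (c n : ℂ) * w ^ (n + 2)) (1 - (1 - w) * (1 - w / p) ^ (-(p : ℂ))) :=
    fun hw => by
      simpa [c] using hasSum_one_sub_one_sub_mul (hasSum_negPowCoeff hp0 (hw.trans_lt hp))
        (by simp) (by simp [negPowCoeff_one hp0.ne'])
  have hc_sum : HasSum c 1 := by
    refine Complex.hasSum_ofReal.1 ?_
    simpa using hexpand (w := 1) (by simp)
  have hfactor : ∑' n, (c n : ℂ) * z ^ (n + 2) = z ^ 2 * ∑' n, (c n : ℂ) * z ^ n := by
    rw [← tsum_mul_left]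
    congr 1 with n
    ring
  rw [← (hexpand hz).tsum_eq, hfactor, norm_mul, norm_pow]
  exact mul_lt_of_lt_one_right (pow_pos (norm_pos_iff.2 hz0) 2)
    (norm_tsum_ofReal_mul_pow_lt_one (fun n => (hc_pos n).le) hc_sum (hc_pos 0) (hc_pos 1) hz hz1)
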